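/- Let $(X_t(x))$ and $(X_t^R(x))$ be two processes that coincide up to a stopping time $\sigma_R(x)$, and assume: (i) for every fixed $R$ and bounded measurable $f$, $x \mapsto \mathbb{E}[f(X_t^R(x))]$ is continuous; (ii) $\mathbb{P}[\sigma_R(x) \le t] \le e^{c_1 t} V(x)/R$ for a function $V$ bounded on compacts. Then $x \mapsto \mathbb{E}[f(X_t(x))]$ is continuous for every bounded measurable $f$, i.e., the semigroup of $X$ is strong Feller. -/

import Mathlib

open MeasureTheory Filter Topology
open scoped ENNReal

/-!
Before the exit time `σ_R(x)` the processes `X(x)` and `X^R(x)` agree, so for `|f| ≤ M` the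
semigroups differ at `x` by at most `2M ℙ[σ_R(x) ≤ t] ≤ 2M e^{c₁t} V(x) / R`. Since `V` is bounded
on compacts, the continuous functions `x ↦ 𝔼[f(X_t^R(x))]` converge to `x ↦ 𝔼[f(X_t(x))]`
locally uniformly as `R → ∞`, and a locally uniform limit of continuous functions is continuous.
-/

section Localization

variable {Ω : Type*} [MeasurableSpace Ω] {μ : Measure Ω} [IsFiniteMeasure μ]

theorem abs_integral_sub_le_of_eq_of_notMem {h₁ h₂ : Ω → ℝ} (hi₁ : Integrable h₁ μ)
    (hi₂ : Integrable h₂ μ) {s : Set Ω} {C : ℝ} (hC : ∀ ω ∈ s, |h₁ ω - h₂ ω| ≤ C)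
    (heq : ∀ ω ∉ s, h₁ ω = h₂ ω) :
    |∫ ω, h₁ ω ∂μ - ∫ ω, h₂ ω ∂μ| ≤ C * μ.real s := by
  have hcompl : ∀ ω ∉ s, h₁ ω - h₂ ω = 0 := fun ω hω => sub_eq_zero.mpr (heq ω hω)
  rw [← integral_sub hi₁ hi₂, ← setIntegral_eq_integral_of_forall_compl_eq_zero hcompl,
    ← Real.norm_eq_abs]
  exact norm_setIntegral_le_of_norm_le_const (measure_lt_top μ s) hC

theorem abs_integral_comp_sub_le_of_eq_of_notMem {E : Type*} [MeasurableSpace E] {f : E → ℝ}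
    {M : ℝ} (hf : Measurable f) (hM : ∀ y, |f y| ≤ M) {g₁ g₂ : Ω → E} (hg₁ : Measurable g₁)
    (hg₂ : Measurable g₂) {s : Set Ω} (heq : ∀ ω ∉ s, g₁ ω = g₂ ω) :
    |∫ ω, f (g₁ ω) ∂μ - ∫ ω, f (g₂ ω) ∂μ| ≤ 2 * M * μ.real s := by
  have integrable_comp : ∀ g : Ω → E, Measurable g → Integrable (fun ω => f (g ω)) μ :=
    fun g hg => .of_bound (hf.comp hg).aestronglyMeasurable M (.of_forall fun ω => hM (g ω))
  refine abs_integral_sub_le_of_eq_of_notMem (integrable_comp g₁ hg₁) (integrable_comp g₂ hg₂)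
    (fun ω _ => ?_) (fun ω hω => by rw [heq ω hω])
  calc |f (g₁ ω) - f (g₂ ω)| ≤ |f (g₁ ω)| + |f (g₂ ω)| := abs_sub _ _
    _ ≤ 2 * M := by linarith [hM (g₁ ω), hM (g₂ ω)]

end Localization

theorem continuous_of_forall_isCompact_abs_sub_le_div {X : Type*} [TopologicalSpace X]
    [LocallyCompactSpace X] {F : ℝ → X → ℝ} {f : X → ℝ} (hF : ∀ R, Continuous (F R))
    (hbound : ∀ K, IsCompact K → ∃ C, ∀ R > 0, ∀ x ∈ K, |f x - F R x| ≤ C / R) :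
    Continuous f := by
  refine TendstoLocallyUniformly.continuous (p := atTop) ?_ (.of_forall hF)
  rw [tendstoLocallyUniformly_iff_forall_isCompact]
  intro K hK
  obtain ⟨C, hC⟩ := hbound K hK
  have hdecay : Tendsto (fun R : ℝ => C / R) atTop (𝓝 0) := tendsto_const_nhds.div_atTop tendsto_id
  rw [Metric.tendstoUniformlyOn_iff]
  intro ε hε
  filter_upwards [hdecay.eventually (gt_mem_nhds hε), eventually_gt_atTop 0] with R hR hR₀ x hx
  exact (Real.dist_eq _ _ ▸ hC R hR₀ x hx).trans_lt hR

theorem stmt_15_general {d : ℕ} {Ω : Type*} [MeasurableSpace Ω]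
    (μ : Measure Ω) (hμ : IsProbabilityMeasure μ)
    (X : ℝ → EuclideanSpace ℝ (Fin d) → Ω → EuclideanSpace ℝ (Fin d))
    (XR : ℝ → ℝ → EuclideanSpace ℝ (Fin d) → Ω → EuclideanSpace ℝ (Fin d))
    (σ : ℝ → EuclideanSpace ℝ (Fin d) → Ω → ℝ≥0∞)
    (V : EuclideanSpace ℝ (Fin d) → ℝ) (c₁ : ℝ)
    (t : ℝ)
    (hmeasX : ∀ x, Measurable fun ω => X t x ω)
    (hmeasXR : ∀ R x, Measurable fun ω => XR R t x ω)
    -- (coincidence up to the stopping time)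
    (hcoinc : ∀ R x ω, ENNReal.ofReal t < σ R x ω → X t x ω = XR R t x ω)
    -- (i) the localized semigroups are strong Feller
    (hSFR : ∀ (R : ℝ) (f : EuclideanSpace ℝ (Fin d) → ℝ), Measurable f →
      (∃ M, ∀ y, |f y| ≤ M) → Continuous fun x => ∫ ω, f (XR R t x ω) ∂μ)
    -- (ii) the exit-time tail bound
    (htail : ∀ R > (0 : ℝ), ∀ x,
      (μ {ω | σ R x ω ≤ ENNReal.ofReal t}).toReal ≤ Real.exp (c₁ * t) * V x / R)
    -- V is bounded on compacts
    (hVb : ∀ K : Set (EuclideanSpace ℝ (Fin d)), IsCompact K → ∃ M, ∀ x ∈ K, V x ≤ M) :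
    ∀ f : EuclideanSpace ℝ (Fin d) → ℝ, Measurable f → (∃ M, ∀ y, |f y| ≤ M) →
      Continuous fun x => ∫ ω, f (X t x ω) ∂μ := by
  rintro f hf ⟨M, hM⟩
  have hM₀ : 0 ≤ M := (abs_nonneg _).trans (hM 0)
  refine continuous_of_forall_isCompact_abs_sub_le_div (fun R => hSFR R f hf ⟨M, hM⟩)
    fun K hK => ?_
  obtain ⟨MK, hMK⟩ := hVb K hK
  refine ⟨2 * M * (Real.exp (c₁ * t) * MK), fun R hR x hx => ?_⟩
  calc |∫ ω, f (X t x ω) ∂μ - ∫ ω, f (XR R t x ω) ∂μ|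
      ≤ 2 * M * μ.real {ω | σ R x ω ≤ ENNReal.ofReal t} :=
        abs_integral_comp_sub_le_of_eq_of_notMem hf hM (hmeasX x) (hmeasXR R x)
          fun ω hω => hcoinc R x ω (not_le.mp hω)
    _ ≤ 2 * M * (Real.exp (c₁ * t) * V x / R) := by gcongr; exact htail R hR x
    _ ≤ 2 * M * (Real.exp (c₁ * t) * MK / R) := by gcongr; exact hMK x hx
    _ = 2 * M * (Real.exp (c₁ * t) * MK) / R := (mul_div_assoc _ _ _).symm

/-- Localization argument for the strong Feller property: if `X(x)` and `X^R(x)` coincide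
up to the stopping time `σ_R(x)`, each localized semigroup `x ↦ 𝔼[f(X_t^R(x))]` is
continuous, and `ℙ[σ_R(x) ≤ t] ≤ e^{c₁t}V(x)/R` with `V` bounded on compacts, then
`x ↦ 𝔼[f(X_t(x))]` is continuous for every bounded measurable `f`. -/
theorem stmt_15 {d : ℕ} {Ω : Type*} [MeasurableSpace Ω]
    (μ : Measure Ω) (hμ : IsProbabilityMeasure μ)
    (X : ℝ → EuclideanSpace ℝ (Fin d) → Ω → EuclideanSpace ℝ (Fin d))
    (XR : ℝ → ℝ → EuclideanSpace ℝ (Fin d) → Ω → EuclideanSpace ℝ (Fin d))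
    (σ : ℝ → EuclideanSpace ℝ (Fin d) → Ω → ℝ≥0∞)
    (V : EuclideanSpace ℝ (Fin d) → ℝ) (c₁ : ℝ)
    (t : ℝ) (ht : 0 ≤ t)
    (hmeasX : ∀ x, Measurable fun ω => X t x ω)
    (hmeasXR : ∀ R x, Measurable fun ω => XR R t x ω)
    (hmeasσ : ∀ R x, Measurable (σ R x))
    -- (coincidence up to the stopping time)
    (hcoinc : ∀ R x ω, ENNReal.ofReal t < σ R x ω → X t x ω = XR R t x ω)
    -- (i) the localized semigroups are strong Feller
    (hSFR : ∀ (R : ℝ) (f : EuclideanSpace ℝ (Fin d) → ℝ), Measurable f →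
      (∃ M, ∀ y, |f y| ≤ M) → Continuous fun x => ∫ ω, f (XR R t x ω) ∂μ)
    -- (ii) the exit-time tail bound
    (htail : ∀ R > (0 : ℝ), ∀ x,
      (μ {ω | σ R x ω ≤ ENNReal.ofReal t}).toReal ≤ Real.exp (c₁ * t) * V x / R)
    -- V is bounded on compacts
    (hVb : ∀ K : Set (EuclideanSpace ℝ (Fin d)), IsCompact K → ∃ M, ∀ x ∈ K, V x ≤ M) :
    ∀ f : EuclideanSpace ℝ (Fin d) → ℝ, Measurable f → (∃ M, ∀ y, |f y| ≤ M) →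
      Continuous fun x => ∫ ω, f (X t x ω) ∂μ :=
  stmt_15_general μ hμ X XR σ V c₁ t hmeasX hmeasXR hcoinc hSFR htail hVb
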